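/- arXiv:2101.09578 — 2 statements merged into one kernel-verified Lean document; each statement's English description precedes it below -/
import Mathlib

section
/- Let H be a real Hilbert space, E : H → ℝ any function, τ > 0, N a natural number, and let x_0, x_1, …, x_N ∈ H and f_0, …, f_{N−1} ∈ H. Suppose that for every k < N the point x_{k+1} minimizes over H the functional F_k(x) := E(x) + (1/(2τ))·‖x − x_k‖² + ⟪x − x_k, f_k⟫. Then E(x_N) + (1/(4τ))·Σ_{k=0}^{N−1} ‖x_{k+1} − x_k‖² ≤ E(x_0) + τ·Σ_{k=0}^{N−1} ‖f_k‖². -/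
open scoped RealInnerProductSpace BigOperators

lemma mm_step {H : Type*} [NormedAddCommGroup H] [InnerProductSpace ℝ H]
    (E : H → ℝ) (τ : ℝ) (hτ : 0 < τ) (a b g : H)
    (h : E b + (1 / (2 * τ)) * ‖b - a‖ ^ 2 + ⟪b - a, g⟫ ≤
        E a + (1 / (2 * τ)) * ‖a - a‖ ^ 2 + ⟪a - a, g⟫) :
    E b + (1 / (4 * τ)) * ‖b - a‖ ^ 2 ≤ E a + τ * ‖g‖ ^ 2 := by
  simp only [sub_self, norm_zero, inner_zero_left] at h
  have hip : -⟪b - a, g⟫ ≤ ‖b - a‖ * ‖g‖ := by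
    have := abs_real_inner_le_norm (b - a) g
    linarith [neg_abs_le ⟪b - a, g⟫, le_abs_self ⟪b - a, g⟫]
  have hyoung : ‖b - a‖ * ‖g‖ ≤ (1 / (4 * τ)) * ‖b - a‖ ^ 2 + τ * ‖g‖ ^ 2 := by
    have h1 : (1 / (4 * τ)) * (4 * τ) = 1 := by field_simp
    nlinarith [sq_nonneg (‖b - a‖ - 2 * τ * ‖g‖), mul_pos hτ hτ, sq_nonneg ‖g‖,
      mul_le_mul_of_nonneg_left (sq_nonneg (‖b - a‖ - 2 * τ * ‖g‖))
        (le_of_lt (by positivity : (0:ℝ) < 1 / (4 * τ)))]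
  have h4 : (1 / (2 * τ)) * ‖b - a‖ ^ 2 = (1/(4*τ)) * ‖b - a‖ ^ 2 + (1/(4*τ)) * ‖b - a‖ ^ 2 := by
    field_simp; ring
  nlinarith

/-- Discrete energy estimate for De Giorgi's minimizing movements scheme with forcing. -/
theorem minimizing_movements_energy_estimate
    {H : Type*} [NormedAddCommGroup H] [InnerProductSpace ℝ H]
    (E : H → ℝ) (τ : ℝ) (hτ : 0 < τ) (N : ℕ) (x : ℕ → H) (f : ℕ → H)
    (hmin : ∀ k < N, ∀ y : H,
      E (x (k + 1)) + (1 / (2 * τ)) * ‖x (k + 1) - x k‖ ^ 2 + ⟪x (k + 1) - x k, f k⟫ ≤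
        E y + (1 / (2 * τ)) * ‖y - x k‖ ^ 2 + ⟪y - x k, f k⟫) :
    E (x N) + (1 / (4 * τ)) * ∑ k ∈ Finset.range N, ‖x (k + 1) - x k‖ ^ 2 ≤
      E (x 0) + τ * ∑ k ∈ Finset.range N, ‖f k‖ ^ 2 := by
  induction N with
  | zero => simp
  | succ n ih =>
    have hprev := ih (fun k hk y => hmin k (Nat.lt_succ_of_lt hk) y)
    have hstep := mm_step E τ hτ (x n) (x (n+1)) (f n)
      (hmin n (Nat.lt_succ_self n) (x n))
    rw [Finset.sum_range_succ, Finset.sum_range_succ]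
    linarith [mul_le_mul_of_nonneg_left (le_refl (0:ℝ)) (le_refl (0:ℝ))]
end

section
/- For every natural number n ≥ 1 there exists a constant C > 0, depending only on n, with the following property: let N be a natural number, τ ≥ 0, and for k = 1, …, N let A_k be a real n×n matrix with trace A_k = 0 and operator norm ‖A_k‖ ≤ L_k, where τ·L_k ≤ 1. Then ∏_{k=1}^N det(I + τ·A_k) ≤ exp(C·τ²·Σ_{k=1}^N L_k²). If moreover C·τ²·L_k² ≤ 1/2 for every k, then also ∏_{k=1}^N det(I + τ·A_k) ≥ exp(−2C·τ²·Σ_{k=1}^N L_k²). -/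
/-!
Expand `det (1 + B)` over permutations. The identity term is `∏ i, (1 + B i i)`, which equals
`1 + trace B + O(b²)` when all entries of `B` are bounded by `b ≤ 1`; every other permutation
moves at least two indices and so contributes `O(b²)`. For `B = τ • A` with `trace A = 0` and
`|A i j| ≤ ‖A‖ ≤ L`, this gives `|det (1 + τ • A) - 1| ≤ C τ² L²`. The two product bounds then
follow factorwise from `1 + x ≤ exp x` and, for `0 ≤ x ≤ 1/2`, from `exp (-2x) ≤ 1 - x`.
-/

open Finset Equiv

theorem abs_prod_one_add_sub_one_sub_sum_le {ι : Type*} (s : Finset ι) {x : ι → ℝ} {b : ℝ}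
    (hb₀ : 0 ≤ b) (hb₁ : b ≤ 1) (hx : ∀ i ∈ s, |x i| ≤ b) :
    |∏ i ∈ s, (1 + x i) - 1 - ∑ i ∈ s, x i| ≤ #s * 2 ^ #s * b ^ 2 := by
  induction s using Finset.cons_induction with
  | empty => simp
  | cons a s ha ih =>
    simp only [forall_mem_cons] at hx
    obtain ⟨hxa, hxs⟩ := hx
    have hsum : |∑ i ∈ s, x i| ≤ #s * b := by
      simpa using (abs_sum_le_sum_abs x s).trans (sum_le_sum hxs)
    have hone_add : |1 + x a| ≤ 2 := (abs_add_le _ _).trans (by rw [abs_one]; linarith)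
    have hm : (#s : ℝ) ≤ 2 ^ #s := by exact_mod_cast Nat.lt_two_pow_self.le
    rw [prod_cons, sum_cons, card_cons]
    calc |(1 + x a) * ∏ i ∈ s, (1 + x i) - 1 - (x a + ∑ i ∈ s, x i)|
        = |(1 + x a) * (∏ i ∈ s, (1 + x i) - 1 - ∑ i ∈ s, x i) + x a * ∑ i ∈ s, x i| := by
          ring_nf
      _ ≤ 2 * (#s * 2 ^ #s * b ^ 2) + b * (#s * b) := by
          refine (abs_add_le _ _).trans ?_
          rw [abs_mul, abs_mul]
          gcongr
          exact ih hxs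
      _ ≤ ↑(#s + 1) * 2 ^ (#s + 1) * b ^ 2 := by
          have : 0 ≤ (2 : ℝ) ^ #s * b ^ 2 := by positivity
          rw [pow_succ (2 : ℝ)]
          push_cast
          nlinarith [mul_nonneg (sub_nonneg.2 hm) (sq_nonneg b)]

namespace Matrix

theorem norm_apply_le_norm_toEuclideanCLM {𝕜 n : Type*} [RCLike 𝕜] [Fintype n] [DecidableEq n]
    (A : Matrix n n 𝕜) (i j : n) : ‖A i j‖ ≤ ‖toEuclideanCLM (𝕜 := 𝕜) A‖ := by
  set T := toEuclideanCLM (𝕜 := 𝕜) A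
  calc ‖A i j‖ = ‖T (EuclideanSpace.single j 1) i‖ := by
        simp [T, EuclideanSpace.single, mulVec_single]
    _ ≤ ‖T (EuclideanSpace.single j 1)‖ := PiLp.norm_apply_le _ _
    _ ≤ ‖T‖ * ‖EuclideanSpace.single j (1 : 𝕜)‖ := T.le_opNorm _
    _ = ‖T‖ := by simp

variable {n : Type*} [Fintype n] [DecidableEq n] {B : Matrix n n ℝ} {b : ℝ}

theorem abs_prod_one_add_apply_perm_le (hb₀ : 0 ≤ b) (hb₁ : b ≤ 1) (hB : ∀ i j, |B i j| ≤ b)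
    {σ : Perm n} (hσ : σ ≠ 1) :
    |∏ i, (1 + B) (σ i) i| ≤ 2 ^ Fintype.card n * b ^ 2 := by
  have hentry : ∀ i j, |(1 + B) i j| ≤ 2 := fun i j => by
    rcases eq_or_ne i j with rfl | hij
    · simpa using (abs_add_le 1 (B i i)).trans (by rw [abs_one]; linarith [hB i i])
    · simpa [one_apply_ne hij] using (hB i j).trans (by linarith)
  have hmoved : ∀ i ∈ σ.support, |(1 + B) (σ i) i| ≤ b := fun i hi => by
    simpa [one_apply_ne (Perm.mem_support.mp hi)] using hB (σ i) i
  rw [abs_prod, ← prod_mul_prod_compl σ.support, mul_comm]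
  gcongr ?_ * ?_
  · calc ∏ i ∈ σ.supportᶜ, |(1 + B) (σ i) i| ≤ ∏ i ∈ σ.supportᶜ, (2 : ℝ) :=
          prod_le_prod (fun _ _ => abs_nonneg _) fun i _ => hentry _ _
      _ ≤ 2 ^ Fintype.card n := by
          rw [prod_const]; exact pow_le_pow_right₀ one_le_two (card_le_univ _)
  · calc ∏ i ∈ σ.support, |(1 + B) (σ i) i| ≤ ∏ i ∈ σ.support, b :=
          prod_le_prod (fun _ _ => abs_nonneg _) hmoved
      _ ≤ b ^ 2 := by
          rw [prod_const]
          exact pow_le_pow_of_le_one hb₀ hb₁ (Perm.one_lt_card_support_of_ne_one hσ)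

theorem abs_det_one_add_sub_one_le (htr : B.trace = 0) (hb₀ : 0 ≤ b) (hb₁ : b ≤ 1)
    (hB : ∀ i j, |B i j| ≤ b) :
    |(1 + B).det - 1| ≤
      (Fintype.card n + (Fintype.card n).factorial) * 2 ^ Fintype.card n * b ^ 2 := by
  rw [det_apply', ← add_sum_erase _ _ (mem_univ 1)]
  simp only [Perm.sign_one, Units.val_one, Int.cast_one, one_mul, Perm.coe_one, id]
  have hdiag : |∏ i, (1 + B) i i - 1| ≤ Fintype.card n * 2 ^ Fintype.card n * b ^ 2 := by
    have htr' : ∑ i, B i i = 0 := htr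
    simpa [htr'] using
      abs_prod_one_add_sub_one_sub_sum_le univ hb₀ hb₁ (fun i _ => hB i i)
  have hperm : |∑ σ ∈ univ.erase 1, ((Perm.sign σ : ℤ) : ℝ) * ∏ i, (1 + B) (σ i) i|
      ≤ (Fintype.card n).factorial * (2 ^ Fintype.card n * b ^ 2) := by
    refine (abs_sum_le_sum_abs _ _).trans ?_
    calc _ ≤ ∑ σ ∈ univ.erase (1 : Perm n), 2 ^ Fintype.card n * b ^ 2 := by
          refine sum_le_sum fun σ hσ => ?_
          rw [abs_mul, abs_unit_intCast, one_mul]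
          exact abs_prod_one_add_apply_perm_le hb₀ hb₁ hB (ne_of_mem_erase hσ)
      _ ≤ _ := by
          rw [sum_const, nsmul_eq_mul, ← Fintype.card_perm]
          gcongr
          exact_mod_cast card_le_univ _
  calc _ = |(∏ i, (1 + B) i i - 1) +
        ∑ σ ∈ univ.erase 1, ((Perm.sign σ : ℤ) : ℝ) * ∏ i, (1 + B) (σ i) i| := by
        ring_nf
    _ ≤ _ := (abs_add_le _ _).trans (add_le_add hdiag hperm)
    _ = _ := by ring

theorem abs_det_one_add_smul_sub_one_le {A : Matrix n n ℝ} {τ L : ℝ} (htr : A.trace = 0)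
    (hA : ‖toEuclideanCLM (𝕜 := ℝ) A‖ ≤ L) (hτ : 0 ≤ τ) (hτL : τ * L ≤ 1) :
    |(1 + τ • A).det - 1| ≤
      (Fintype.card n + (Fintype.card n).factorial) * 2 ^ Fintype.card n * τ ^ 2 * L ^ 2 := by
  have hentry : ∀ i j, |(τ • A) i j| ≤ τ * L := fun i j => by
    rw [smul_apply, smul_eq_mul, abs_mul, abs_of_nonneg hτ, ← Real.norm_eq_abs]
    exact mul_le_mul_of_nonneg_left ((norm_apply_le_norm_toEuclideanCLM A i j).trans hA) hτ
  have := abs_det_one_add_sub_one_le (by rw [trace_smul, htr, smul_zero])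
    (mul_nonneg hτ ((norm_nonneg _).trans hA)) hτL hentry
  linarith [mul_pow τ L 2]

end Matrix

theorem Real.exp_neg_two_mul_le_one_sub {c : ℝ} (hc₀ : 0 ≤ c) (hc : c ≤ 1 / 2) :
    Real.exp (-(2 * c)) ≤ 1 - c := by
  have h : 1 ≤ (1 - c) * (1 + 2 * c) := by nlinarith
  have hexp : 1 + 2 * c ≤ Real.exp (2 * c) := by linarith [Real.add_one_le_exp (2 * c)]
  rw [Real.exp_neg, inv_le_iff_one_le_mul₀ (Real.exp_pos _)]
  exact h.trans (mul_le_mul_of_nonneg_left hexp (by linarith))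

theorem prod_le_exp_sum_of_abs_sub_one_le {ι : Type*} {s : Finset ι} {y c : ι → ℝ}
    (h : ∀ i ∈ s, |y i - 1| ≤ c i) : ∏ i ∈ s, y i ≤ Real.exp (∑ i ∈ s, c i) := by
  rw [Real.exp_sum]
  calc ∏ i ∈ s, y i ≤ ∏ i ∈ s, |y i| := (le_abs_self _).trans (abs_prod _ _).le
    _ ≤ ∏ i ∈ s, Real.exp (c i) := prod_le_prod (fun _ _ => abs_nonneg _) fun i hi => by
        linarith [abs_sub_abs_le_abs_sub (y i) 1, h i hi, Real.add_one_le_exp (c i),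
          abs_one (α := ℝ)]

theorem exp_neg_two_mul_sum_le_prod {ι : Type*} {s : Finset ι} {y c : ι → ℝ}
    (h : ∀ i ∈ s, |y i - 1| ≤ c i) (hc : ∀ i ∈ s, c i ≤ 1 / 2) :
    Real.exp (-(2 * ∑ i ∈ s, c i)) ≤ ∏ i ∈ s, y i := by
  rw [mul_sum, ← sum_neg_distrib, Real.exp_sum]
  refine prod_le_prod (fun _ _ => (Real.exp_pos _).le) fun i hi => ?_
  calc Real.exp (-(2 * c i)) ≤ 1 - c i :=
        Real.exp_neg_two_mul_le_one_sub ((abs_nonneg _).trans (h i hi)) (hc i hi)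
    _ ≤ y i := by linarith [(abs_le.mp (h i hi)).1]

theorem prod_det_one_add_smul_tracefree_estimate_general (n : ℕ) :
    ∃ C > 0, ∀ (N : ℕ) (τ : ℝ), 0 ≤ τ →
      ∀ (A : ℕ → Matrix (Fin n) (Fin n) ℝ) (L : ℕ → ℝ),
      (∀ k, 1 ≤ k → k ≤ N → (A k).trace = 0) →
      (∀ k, 1 ≤ k → k ≤ N → ‖Matrix.toEuclideanCLM (𝕜 := ℝ) (A k)‖ ≤ L k) →
      (∀ k, 1 ≤ k → k ≤ N → τ * L k ≤ 1) →
      ((∏ k ∈ Finset.Icc 1 N, (1 + τ • A k).det) ≤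
          Real.exp (C * τ ^ 2 * ∑ k ∈ Finset.Icc 1 N, L k ^ 2)) ∧
      ((∀ k, 1 ≤ k → k ≤ N → C * τ ^ 2 * L k ^ 2 ≤ 1 / 2) →
        Real.exp (-(2 * C) * τ ^ 2 * ∑ k ∈ Finset.Icc 1 N, L k ^ 2) ≤
          ∏ k ∈ Finset.Icc 1 N, (1 + τ • A k).det) := by
  set C : ℝ := (n + n.factorial) * 2 ^ n
  refine ⟨C, by positivity, fun N τ hτ A L htr hA hτL => ?_⟩
  have hfactor : ∀ k ∈ Icc 1 N, |(1 + τ • A k).det - 1| ≤ C * τ ^ 2 * L k ^ 2 := fun k hk => by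
    obtain ⟨hk₁, hkN⟩ := mem_Icc.mp hk
    simpa using Matrix.abs_det_one_add_smul_sub_one_le (htr k hk₁ hkN) (hA k hk₁ hkN) hτ
      (hτL k hk₁ hkN)
  constructor
  · rw [mul_sum]
    exact prod_le_exp_sum_of_abs_sub_one_le hfactor
  · intro hsmall
    have hexponent : -(2 * C) * τ ^ 2 * ∑ k ∈ Icc 1 N, L k ^ 2
        = -(2 * ∑ k ∈ Icc 1 N, C * τ ^ 2 * L k ^ 2) := by
      rw [← mul_sum]; ring
    rw [hexponent]
    exact exp_neg_two_mul_sum_le_prod hfactor fun k hk =>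
      hsmall k (mem_Icc.mp hk).1 (mem_Icc.mp hk).2

/-- Quantitative bound for the Jacobian determinant of composed discrete flow maps
of trace-free (divergence-free) velocity gradients. -/
theorem prod_det_one_add_smul_tracefree_estimate (n : ℕ) (hn : 1 ≤ n) :
    ∃ C > 0, ∀ (N : ℕ) (τ : ℝ), 0 ≤ τ →
      ∀ (A : ℕ → Matrix (Fin n) (Fin n) ℝ) (L : ℕ → ℝ),
      (∀ k, 1 ≤ k → k ≤ N → (A k).trace = 0) →
      (∀ k, 1 ≤ k → k ≤ N → ‖Matrix.toEuclideanCLM (𝕜 := ℝ) (A k)‖ ≤ L k) →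
      (∀ k, 1 ≤ k → k ≤ N → τ * L k ≤ 1) →
      ((∏ k ∈ Finset.Icc 1 N, (1 + τ • A k).det) ≤
          Real.exp (C * τ ^ 2 * ∑ k ∈ Finset.Icc 1 N, L k ^ 2)) ∧
      ((∀ k, 1 ≤ k → k ≤ N → C * τ ^ 2 * L k ^ 2 ≤ 1 / 2) →
        Real.exp (-(2 * C) * τ ^ 2 * ∑ k ∈ Finset.Icc 1 N, L k ^ 2) ≤
          ∏ k ∈ Finset.Icc 1 N, (1 + τ • A k).det) :=
  prod_det_one_add_smul_tracefree_estimate_general n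
end
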